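/- Let S = ⟨qm₁,…,qm_d, pn₁,…,pn_k⟩ be a specific gluing of S₁ and S₂. If the Hilbert function of S₁ is non-decreasing (H_{S₁}(n) ≤ H_{S₁}(n+1) for all n≥0), then the Hilbert function of S is non-decreasing. -/

import Mathlib

open scoped Pointwise

/-- `S ⊆ ℕ` is a numerical semigroup: it contains `0`, is closed under
addition, and has finite complement in `ℕ`. -/
def IsNumSgp (S : Set ℕ) : Prop :=
  (0 : ℕ) ∈ S ∧ (∀ a ∈ S, ∀ b ∈ S, a + b ∈ S) ∧ {x : ℕ | x ∉ S}.Finite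

/-- `nM S t` is the `t`-fold sumset of the maximal ideal `M = S \ {0}`,
with the convention `nM S 0 = S`. -/
def nM (S : Set ℕ) : ℕ → Set ℕ
  | 0 => S
  | t + 1 => (S \ {0}) + nM S t

/-- the order of `s` with respect to `S` : the largest `t` with `s ∈ tM`. -/
noncomputable def ordS (S : Set ℕ) (s : ℕ) : ℕ := sSup {t : ℕ | s ∈ nM S t}

/-- the multiplicity of `S` : its least nonzero element. -/
noncomputable def mult (S : Set ℕ) : ℕ := sInf {x : ℕ | x ∈ S ∧ x ≠ 0}

/-- the Apéry set of `S` with respect to `x` : elements `s ∈ S` with `s - x ∉ S`. -/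
def Ap (S : Set ℕ) (x : ℕ) : Set ℕ := {s : ℕ | s ∈ S ∧ ¬ ∃ t ∈ S, s = t + x}

/-- membership of an integer in (the image in `ℤ` of) `S`. -/
def zmem (S : Set ℕ) (z : ℤ) : Prop := ∃ t ∈ S, (t : ℤ) = z

/-- the Frobenius number of `S` : the largest integer not in `S`. -/
noncomputable def Frob (S : Set ℕ) : ℤ := sSup {z : ℤ | ¬ zmem S z}

/-- `S` is symmetric: for every integer `z`, `z ∈ S` iff `F(S) - z ∉ S`. -/
def IsSymmetric (S : Set ℕ) : Prop := ∀ z : ℤ, zmem S z ↔ ¬ zmem S (Frob S - z)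

/-- the set of maximal elements of `Ap S x` with respect to the order
`u ⪯ v` iff `v = u + z` for some `z ∈ S`. -/
def MaxAp (S : Set ℕ) (x : ℕ) : Set ℕ :=
  {w : ℕ | w ∈ Ap S x ∧ ∀ y ∈ Ap S x, (∃ z ∈ S, y = w + z) → y = w}

/-- the set of maximal elements of `Ap S x` with respect to the order
`u ⪯_M v` iff `v = u + z` for some `z ∈ S` with `ord(v) = ord(u) + ord(z)`. -/
def MaxMAp (S : Set ℕ) (x : ℕ) : Set ℕ :=
  {w : ℕ | w ∈ Ap S x ∧ ∀ y ∈ Ap S x,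
    (∃ z ∈ S, y = w + z ∧ ordS S y = ordS S w + ordS S z) → y = w}

/-- `S` is M-pure with respect to `x` : all maximal elements of `Ap S x`
under `⪯_M` have the same order. -/
def MPureWrt (S : Set ℕ) (x : ℕ) : Prop :=
  ∀ w ∈ MaxMAp S x, ∀ w' ∈ MaxMAp S x, ordS S w = ordS S w'

/-- `S` is M-pure : it is M-pure with respect to its multiplicity. -/
def MPure (S : Set ℕ) : Prop := MPureWrt S (mult S)

/-- `β_i(x)` : the number of elements of `Ap S x` of order `i`. -/
noncomputable def betaS (S : Set ℕ) (x i : ℕ) : ℕ := {w ∈ Ap S x | ordS S w = i}.ncard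

/-- `d(x)` : the maximal order of an element of `Ap S x`. -/
noncomputable def dS (S : Set ℕ) (x : ℕ) : ℕ := sSup (ordS S '' Ap S x)

/-- the reduction number of `S` : the least `r` with `(r+1)M = m(S) + rM`. -/
noncomputable def redNum (S : Set ℕ) : ℕ :=
  sInf {r : ℕ | nM S (r + 1) = (fun y => mult S + y) '' nM S r}

/-- `l_x(S) = max { ord(s+x) - ord(x) - ord(s) : s ∈ S, ord(s) ≤ r }`. -/
noncomputable def lS (S : Set ℕ) (x : ℕ) : ℕ :=
  sSup {t : ℕ | ∃ s ∈ S, ordS S s ≤ redNum S ∧ t = ordS S (s + x) - ordS S x - ordS S s}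

/-- the Hilbert function of `S`. -/
noncomputable def HilbS (S : Set ℕ) (t : ℕ) : ℕ := (nM S t \ nM S (t + 1)).ncard

/-- The data of a gluing `S = ⟨q m₁, …, q m_d, p n₁, …, p n_k⟩` of two numerical
semigroups `S₁ = ⟨m₁, …, m_d⟩` and `S₂ = ⟨n₁, …, n_k⟩`, minimally generated by
`m₁ < ⋯ < m_d` and `n₁ < ⋯ < n_k`, where `p ∈ S₁ \ {m₁, …, m_d}`,
`q ∈ S₂ \ {n₁, …, n_k}` and `gcd(p, q) = 1`. -/
structure Gluing where
  d : ℕ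
  k : ℕ
  hd : 0 < d
  hk : 0 < k
  m : Fin d → ℕ
  n : Fin k → ℕ
  p : ℕ
  q : ℕ
  hm : StrictMono m
  hn : StrictMono n
  hmin₁ : ∀ i, m i ∉ AddSubmonoid.closure (Set.range m \ {m i})
  hmin₂ : ∀ j, n j ∉ AddSubmonoid.closure (Set.range n \ {n j})
  hnum₁ : IsNumSgp (AddSubmonoid.closure (Set.range m) : Set ℕ)
  hnum₂ : IsNumSgp (AddSubmonoid.closure (Set.range n) : Set ℕ)
  hp : p ∈ AddSubmonoid.closure (Set.range m)
  hq : q ∈ AddSubmonoid.closure (Set.range n)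
  hpm : p ∉ Set.range m
  hqn : q ∉ Set.range n
  hpq : Nat.gcd p q = 1

/-- the numerical semigroup `S₁ = ⟨m₁, …, m_d⟩`. -/
def Gluing.S₁ (G : Gluing) : Set ℕ := (AddSubmonoid.closure (Set.range G.m) : Set ℕ)

/-- the numerical semigroup `S₂ = ⟨n₁, …, n_k⟩`. -/
def Gluing.S₂ (G : Gluing) : Set ℕ := (AddSubmonoid.closure (Set.range G.n) : Set ℕ)

/-- the glued numerical semigroup `S = ⟨q m₁, …, q m_d, p n₁, …, p n_k⟩`. -/
def Gluing.S (G : Gluing) : Set ℕ :=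
  (AddSubmonoid.closure
    ((fun x => G.q * x) '' Set.range G.m ∪ (fun x => G.p * x) '' Set.range G.n) : Set ℕ)

/-- the smallest generator `m₁` of `S₁`. -/
def Gluing.m₁ (G : Gluing) : ℕ := G.m ⟨0, G.hd⟩

/-- the smallest generator `n₁` of `S₂`. -/
def Gluing.n₁ (G : Gluing) : ℕ := G.n ⟨0, G.hk⟩

/-- the gluing is specific if `ord_{S₂}(q) + l_q(S₂) ≤ ord_{S₁}(p)`. -/
def Gluing.Specific (G : Gluing) : Prop := ordS G.S₂ G.q + lS G.S₂ G.q ≤ ordS G.S₁ G.p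

/-- the gluing is nice if `q = a n₁` for some `1 < a ≤ ord_{S₁}(p)`. -/
def Gluing.Nice (G : Gluing) : Prop := ∃ a : ℕ, 1 < a ∧ a ≤ ordS G.S₁ G.p ∧ G.q = a * G.n₁

/-!
Every element of the gluing `S` is `q a + p b` with `a ∈ S₁` and `b` in the Apéry set
`Ap(S₂, q)`, uniquely, and any other representation `q A + p B` arises from this one by moving
some `t q` from `a`'s side into `b`'s. The inequality `ord(s + q) ≤ ord s + ord q + l_q`, iterated,
shows that such a move never gains order in a specific gluing, so
`ord_S (q a + p b) = ord_{S₁} a + ord_{S₂} b`. Hence the elements of order `n` of `S` correspond to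
the pairs `(a, b)` with `ord a + ord b = n`, and injections between consecutive order levels of
`S₁` (which exist since `H_{S₁}` is non-decreasing) yield injections between those of `S`.
-/

section Order

variable {S : Set ℕ} {x y t : ℕ}

@[simp]
lemma nM_zero : nM S 0 = S := rfl

lemma mem_nM_succ : x ∈ nM S (t + 1) ↔ ∃ a ∈ S \ {0}, ∃ b ∈ nM S t, a + b = x :=
  Set.mem_add

lemma le_of_mem_nM (hx : x ∈ nM S t) : t ≤ x := by
  induction t generalizing x with
  | zero => exact Nat.zero_le x
  | succ t ih =>
    obtain ⟨a, ha, b, hb, rfl⟩ := mem_nM_succ.mp hx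
    have : a ≠ 0 := ha.2
    have := ih hb
    omega

lemma bddAbove_setOf_mem_nM (x : ℕ) : BddAbove {t | x ∈ nM S t} :=
  ⟨x, fun _ => le_of_mem_nM⟩

lemma le_ordS (hx : x ∈ nM S t) : t ≤ ordS S x :=
  le_csSup (bddAbove_setOf_mem_nM x) hx

lemma mem_nM_ordS (hx : x ∈ S) : x ∈ nM S (ordS S x) :=
  Nat.sSup_mem ⟨0, hx⟩ (bddAbove_setOf_mem_nM x)

section AddClosed

variable (hS : ∀ a ∈ S, ∀ b ∈ S, a + b ∈ S)
include hS

lemma nM_subset (t : ℕ) : nM S t ⊆ S := by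
  induction t with
  | zero => exact subset_rfl
  | succ t ih =>
    rintro x hx
    obtain ⟨a, ha, b, hb, rfl⟩ := mem_nM_succ.mp hx
    exact hS a ha.1 b (ih hb)

lemma add_mem_nM (hx : x ∈ S) (hy : y ∈ nM S t) : x + y ∈ nM S t := by
  induction t generalizing y with
  | zero => exact hS x hx y hy
  | succ t ih =>
    obtain ⟨a, ha, b, hb, rfl⟩ := mem_nM_succ.mp hy
    exact mem_nM_succ.mpr ⟨a, ha, x + b, ih hb, by ring⟩

lemma add_mem_nM_add {s : ℕ} (hx : x ∈ nM S s) (hy : y ∈ nM S t) : x + y ∈ nM S (s + t) := by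
  induction s generalizing x with
  | zero => simpa using add_mem_nM hS hx hy
  | succ s ih =>
    obtain ⟨a, ha, b, hb, rfl⟩ := mem_nM_succ.mp hx
    rw [add_right_comm]
    exact mem_nM_succ.mpr ⟨a, ha, b + y, ih hb, by ring⟩

lemma nM_antitone : Antitone (nM S) :=
  antitone_nat_of_succ_le fun t x hx => by
    obtain ⟨a, ha, b, hb, rfl⟩ := mem_nM_succ.mp hx
    exact add_mem_nM hS ha.1 hb

lemma mem_nM_iff_le_ordS (hx : x ∈ S) : x ∈ nM S t ↔ t ≤ ordS S x :=
  ⟨le_ordS, fun h => nM_antitone hS h (mem_nM_ordS hx)⟩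

lemma ordS_add_ordS_le (hx : x ∈ S) (hy : y ∈ S) : ordS S x + ordS S y ≤ ordS S (x + y) :=
  le_ordS (add_mem_nM_add hS (mem_nM_ordS hx) (mem_nM_ordS hy))

lemma add_mul_mem (hx : x ∈ S) (hy : y ∈ S) (t : ℕ) : x + t * y ∈ S := by
  induction t with
  | zero => simpa using hx
  | succ t ih => simpa [add_one_mul, add_assoc] using hS _ ih y hy

lemma HilbS_eq_ncard (t : ℕ) : HilbS S t = {x ∈ S | ordS S x = t}.ncard := by
  rw [HilbS]
  congr 1
  ext x
  by_cases hx : x ∈ S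
  · simp only [Set.mem_sdiff, Set.mem_ofPred_eq, mem_nM_iff_le_ordS hS hx, hx, true_and]
    omega
  · simp only [Set.mem_sdiff, Set.mem_ofPred_eq, hx, false_and, iff_false]
    exact fun h => hx (nM_subset hS t h.1)

end AddClosed

end Order

section NumericalSemigroup

variable {S : Set ℕ} {x t : ℕ}

lemma IsNumSgp.exists_forall_le_mem (hS : IsNumSgp S) : ∃ C, ∀ x, C ≤ x → x ∈ S := by
  obtain ⟨C, hC⟩ := hS.2.2.bddAbove
  refine ⟨C + 1, fun x hx => ?_⟩
  by_contra h
  have : x ≤ C := hC h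
  omega

lemma IsNumSgp.mult_mem (hS : IsNumSgp S) : mult S ∈ S \ {0} := by
  obtain ⟨C, hC⟩ := hS.exists_forall_le_mem
  exact Nat.sInf_mem (s := {x | x ∈ S ∧ x ≠ 0}) ⟨C + 1, hC _ (by omega), by omega⟩

lemma IsNumSgp.mult_mem_nM_one (hS : IsNumSgp S) : mult S ∈ nM S 1 :=
  mem_nM_succ.mpr ⟨mult S, hS.mult_mem, 0, hS.1, rfl⟩

lemma IsNumSgp.one_le_ordS (hS : IsNumSgp S) (hx : x ∈ S) (hx0 : x ≠ 0) : 1 ≤ ordS S x :=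
  le_ordS (mem_nM_succ.mpr ⟨x, ⟨hx, hx0⟩, 0, hS.1, rfl⟩)

lemma mul_mult_le_of_mem_nM (hx : x ∈ nM S t) : t * mult S ≤ x := by
  induction t generalizing x with
  | zero => simp
  | succ t ih =>
    obtain ⟨a, ha, b, hb, rfl⟩ := mem_nM_succ.mp hx
    have : mult S ≤ a := Nat.sInf_le ha
    have := ih hb
    rw [add_one_mul]
    omega

lemma IsNumSgp.mul_mem_nM_mul (hS : IsNumSgp S) {c : ℕ} (hx : x ∈ nM S c) (t : ℕ) :
    t * x ∈ nM S (t * c) := by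
  induction t with
  | zero => simpa [nM_zero] using hS.1
  | succ t ih => simpa [add_one_mul, add_comm] using add_mem_nM_add hS.2.1 ih hx

lemma IsNumSgp.mem_nM_of_mul_add_le (hS : IsNumSgp S) {C : ℕ} (hC : ∀ x, C ≤ x → x ∈ S)
    (hx : t * mult S + C ≤ x) : x ∈ nM S t := by
  have hmul : t * mult S ∈ nM S t := by simpa using hS.mul_mem_nM_mul hS.mult_mem_nM_one t
  simpa [Nat.sub_add_cancel (by omega : t * mult S ≤ x)] using
    add_mem_nM hS.2.1 (hC (x - t * mult S) (by omega)) hmul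

lemma IsNumSgp.finite_setOf_ordS_le (hS : IsNumSgp S) (n : ℕ) :
    {x ∈ S | ordS S x ≤ n}.Finite := by
  obtain ⟨C, hC⟩ := hS.exists_forall_le_mem
  refine (Set.finite_Iio ((n + 1) * mult S + C)).subset fun x hx => ?_
  by_contra h
  have := le_ordS (hS.mem_nM_of_mul_add_le hC (not_lt.mp h))
  exact absurd hx.2 (by omega)

lemma IsNumSgp.exists_injOn_ordS_eq_succ (hS : IsNumSgp S) {i : ℕ}
    (h : HilbS S i ≤ HilbS S (i + 1)) : ∃ ψ : ℕ → ℕ,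
      Set.MapsTo ψ {x ∈ S | ordS S x = i} {x ∈ S | ordS S x = i + 1} ∧
      Set.InjOn ψ {x ∈ S | ordS S x = i} := by
  have hfin : ∀ j, {x ∈ S | ordS S x = j}.Finite := fun j =>
    (hS.finite_setOf_ordS_le j).subset fun _ h => ⟨h.1, h.2.le⟩
  rw [HilbS_eq_ncard hS.2.1, HilbS_eq_ncard hS.2.1] at h
  obtain ⟨ψ, hψ, hinj⟩ := (hfin i).exists_injOn_of_encard_le (t := {x ∈ S | ordS S x = i + 1})
    (by rwa [← (hfin i).cast_ncard_eq, ← (hfin (i + 1)).cast_ncard_eq, Nat.cast_le])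
  exact ⟨ψ, hψ, hinj⟩

end NumericalSemigroup

section ReductionNumber

variable {S : Set ℕ} {x : ℕ}

/-- The sets `{j < C | r m + j ∈ rM}` increase with `r`, hence stabilise; as every integer
`≥ C` lies in `S`, each `r m + j` with `j ≥ C` lies in `rM` anyway. -/
lemma IsNumSgp.exists_nM_succ_eq (hS : IsNumSgp S) :
    ∃ r, nM S (r + 1) = (fun y => mult S + y) '' nM S r := by
  obtain ⟨C, hC⟩ := hS.exists_forall_le_mem
  have hm := hS.mult_mem
  let T : ℕ →o Set (Fin C) :=
    ⟨fun r => {j | r * mult S + j ∈ nM S r}, monotone_nat_of_le_succ fun r j hj => by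
      show (r + 1) * mult S + j ∈ nM S (r + 1)
      have := add_mem_nM_add hS.2.1 hS.mult_mem_nM_one hj
      rw [add_comm 1 r] at this
      rwa [add_one_mul, add_comm _ (mult S), add_assoc]⟩
  obtain ⟨r, hr⟩ := WellFoundedGT.monotone_chain_condition T
  refine ⟨r, subset_antisymm (fun x hx => ?_) ?_⟩
  · have hxm := mul_mult_le_of_mem_nM hx
    rw [add_one_mul] at hxm
    refine ⟨x - mult S, ?_, by simp only; omega⟩
    by_cases hj : x - (r + 1) * mult S < C
    · have hmem : (⟨x - (r + 1) * mult S, hj⟩ : Fin C) ∈ T (r + 1) := by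
        show (r + 1) * mult S + (x - (r + 1) * mult S) ∈ nM S (r + 1)
        rwa [Nat.add_sub_cancel' (by rw [add_one_mul]; omega)]
      rw [← hr (r + 1) (by omega)] at hmem
      have hmem' : r * mult S + (x - (r + 1) * mult S) ∈ nM S r := hmem
      convert hmem' using 1
      rw [add_one_mul]
      omega
    · exact hS.mem_nM_of_mul_add_le hC (by rw [add_one_mul] at hj; omega)
  · rintro _ ⟨y, hy, rfl⟩
    exact mem_nM_succ.mpr ⟨mult S, hm, y, hy, rfl⟩

lemma IsNumSgp.nM_succ_eq_of_redNum_le (hS : IsNumSgp S) {r : ℕ} (h : redNum S ≤ r) :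
    nM S (r + 1) = {mult S} + nM S r := by
  induction r, h using Nat.le_induction with
  | base => rw [Set.singleton_add]; exact Nat.sInf_mem hS.exists_nM_succ_eq
  | succ r _ ih =>
    change (S \ {0}) + nM S (r + 1) = {mult S} + ((S \ {0}) + nM S r)
    rw [ih, add_left_comm]

lemma IsNumSgp.exists_eq_mult_add (hS : IsNumSgp S) (hx : x ∈ S) (h : redNum S < ordS S x) :
    ∃ u ∈ S, x = mult S + u ∧ ordS S u + 1 = ordS S x := by
  have hxN : x ∈ nM S (ordS S x - 1 + 1) := by
    rw [Nat.sub_add_cancel (by omega)]; exact mem_nM_ordS hx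
  rw [hS.nM_succ_eq_of_redNum_le (by omega), Set.singleton_add] at hxN
  obtain ⟨u, hu, rfl⟩ : ∃ u ∈ nM S (ordS S x - 1), mult S + u = x := hxN
  have huS := nM_subset hS.2.1 _ hu
  have h₁ := le_ordS hu
  have h₂ := ordS_add_ordS_le hS.2.1 hS.mult_mem.1 huS
  have h₃ := hS.one_le_ordS hS.mult_mem.1 hS.mult_mem.2
  exact ⟨u, huS, rfl, by omega⟩

/-- The defining maximum of `l_q` bounds the defect of `ord` only for `ord s ≤ r`; descending
along `s = m + u` (possible as soon as `ord s > r`) extends the bound to all of `S`. -/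
lemma IsNumSgp.ordS_add_le (hS : IsNumSgp S) {s q : ℕ} (hs : s ∈ S) (hq : q ∈ S) :
    ordS S (s + q) ≤ ordS S s + ordS S q + lS S q := by
  have hbdd : BddAbove {t | ∃ s ∈ S, ordS S s ≤ redNum S ∧
      t = ordS S (s + q) - ordS S q - ordS S s} := by
    refine (((hS.finite_setOf_ordS_le (redNum S)).image
      fun s => ordS S (s + q) - ordS S q - ordS S s).subset ?_).bddAbove
    rintro _ ⟨s, hs, hsr, rfl⟩
    exact ⟨s, ⟨hs, hsr⟩, rfl⟩
  induction hn : ordS S s using Nat.strong_induction_on generalizing s with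
  | _ n ih =>
    have hsup := ordS_add_ordS_le hS.2.1 hs hq
    by_cases hsr : n ≤ redNum S
    · have := le_csSup hbdd ⟨s, hs, hn ▸ hsr, rfl⟩
      unfold lS
      omega
    · obtain ⟨u, hu, rfl, hu'⟩ := hS.exists_eq_mult_add hs (by omega)
      obtain ⟨w, -, hw, hw'⟩ := hS.exists_eq_mult_add (hS.2.1 _ hs q hq) (by omega)
      obtain rfl : w = u + q := by omega
      have := ih (ordS S u) (by omega) hu rfl
      omega

lemma IsNumSgp.ordS_add_mul_le (hS : IsNumSgp S) {s q : ℕ} (hs : s ∈ S) (hq : q ∈ S) (t : ℕ) :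
    ordS S (s + t * q) ≤ ordS S s + t * (ordS S q + lS S q) := by
  induction t with
  | zero => simp
  | succ t ih =>
    have hstq : s + t * q ∈ S := add_mul_mem hS.2.1 hs hq t
    calc ordS S (s + (t + 1) * q) = ordS S (s + t * q + q) := by rw [add_one_mul, add_assoc]
      _ ≤ ordS S (s + t * q) + ordS S q + lS S q := hS.ordS_add_le hstq hq
      _ ≤ ordS S s + (t + 1) * (ordS S q + lS S q) := by rw [add_one_mul]; omega

end ReductionNumber

section Apery

variable {S : Set ℕ} {x B : ℕ}

lemma exists_mem_Ap_add_mul (hx : x ≠ 0) (hB : B ∈ S) : ∃ b ∈ Ap S x, ∃ t, B = b + t * x := by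
  induction B using Nat.strong_induction_on with
  | _ B ih =>
    by_cases hAp : ∃ B' ∈ S, B = B' + x
    · obtain ⟨B', hB', rfl⟩ := hAp
      obtain ⟨b, hb, t, rfl⟩ := ih B' (by omega) hB'
      exact ⟨b, hb, t + 1, by ring⟩
    · exact ⟨B, ⟨hB, hAp⟩, 0, by ring⟩

lemma add_succ_mul_notMem_Ap (hS : ∀ a ∈ S, ∀ b ∈ S, a + b ∈ S) (hB : B ∈ S) (hx : x ∈ S)
    (t : ℕ) : B + (t + 1) * x ∉ Ap S x :=
  fun h => h.2 ⟨B + t * x, add_mul_mem hS hB hx t, by ring⟩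

end Apery

lemma one_mem_of_one_mem_closure {A : Set ℕ} (h : 1 ∈ AddSubmonoid.closure A) : 1 ∈ A := by
  suffices ∀ x ∈ AddSubmonoid.closure A, x = 1 → x ∈ A from this 1 h rfl
  intro x hx
  induction hx using AddSubmonoid.closure_induction with
  | mem y hy => exact fun _ => hy
  | zero => exact fun h => absurd h zero_ne_one
  | add a b _ _ iha ihb =>
    intro hab
    rcases Nat.add_eq_one_iff.mp hab with ⟨rfl, rfl⟩ | ⟨rfl, rfl⟩
    · exact ihb rfl
    · exact iha rfl

lemma mul_mem_nM_of_forall_mul_mem {S T : Set ℕ} {c a t : ℕ} (hc : c ≠ 0)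
    (h : ∀ a ∈ T, c * a ∈ S) (ha : a ∈ nM T t) : c * a ∈ nM S t := by
  induction t generalizing a with
  | zero => exact h a ha
  | succ t ih =>
    obtain ⟨x, hx, y, hy, rfl⟩ := mem_nM_succ.mp ha
    exact mem_nM_succ.mpr ⟨c * x, ⟨h x hx.1, mul_ne_zero hc hx.2⟩, c * y, ih hy, by ring⟩

namespace Gluing

variable (G : Gluing) {a b A B : ℕ}

lemma isNumSgp_S₁ : IsNumSgp G.S₁ := G.hnum₁

lemma isNumSgp_S₂ : IsNumSgp G.S₂ := G.hnum₂

lemma add_mem_S : ∀ x ∈ G.S, ∀ y ∈ G.S, x + y ∈ G.S :=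
  fun _ hx _ hy => AddSubmonoid.add_mem _ hx hy

lemma p_ne_zero : G.p ≠ 0 := by
  intro hp
  have hq : G.q = 1 := by simpa [hp] using G.hpq
  have h1 : 1 ∈ Set.range G.n := one_mem_of_one_mem_closure (hq ▸ G.hq)
  exact G.hqn (hq ▸ h1)

lemma q_ne_zero : G.q ≠ 0 := by
  intro hq
  have hp : G.p = 1 := by simpa [hq] using G.hpq
  have h1 : 1 ∈ Set.range G.m := one_mem_of_one_mem_closure (hp ▸ G.hp)
  exact G.hpm (hp ▸ h1)

lemma mem_S_iff {x : ℕ} : x ∈ G.S ↔ ∃ a ∈ G.S₁, ∃ b ∈ G.S₂, G.q * a + G.p * b = x := by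
  have hmap : ∀ c (s : Set ℕ), AddSubmonoid.closure ((fun x => c * x) '' s) =
      (AddSubmonoid.closure s).map (AddMonoidHom.mulLeft c) :=
    fun c s => (AddMonoidHom.map_mclosure (AddMonoidHom.mulLeft c) s).symm
  simp only [Gluing.S, SetLike.mem_coe, AddSubmonoid.closure_union, AddSubmonoid.mem_sup, hmap,
    AddSubmonoid.mem_map, AddMonoidHom.coe_mulLeft, exists_exists_and_eq_and]
  rfl

lemma mul_mem_S (ha : a ∈ G.S₁) (hb : b ∈ G.S₂) : G.q * a + G.p * b ∈ G.S :=
  G.mem_S_iff.mpr ⟨a, ha, b, hb, rfl⟩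

lemma q_mul_mem_nM {t : ℕ} (ha : a ∈ nM G.S₁ t) : G.q * a ∈ nM G.S t :=
  mul_mem_nM_of_forall_mul_mem G.q_ne_zero
    (fun a ha => by simpa using G.mul_mem_S ha G.isNumSgp_S₂.1) ha

lemma p_mul_mem_nM {t : ℕ} (hb : b ∈ nM G.S₂ t) : G.p * b ∈ nM G.S t :=
  mul_mem_nM_of_forall_mul_mem G.p_ne_zero
    (fun b hb => by simpa using G.mul_mem_S G.isNumSgp_S₁.1 hb) hb

lemma exists_le_ordS_add_ordS_of_mem_nM {x N : ℕ} (hx : x ∈ nM G.S N) :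
    ∃ A ∈ G.S₁, ∃ B ∈ G.S₂, G.q * A + G.p * B = x ∧ N ≤ ordS G.S₁ A + ordS G.S₂ B := by
  have h₁ := G.isNumSgp_S₁
  have h₂ := G.isNumSgp_S₂
  induction N generalizing x with
  | zero =>
    obtain ⟨A, hA, B, hB, rfl⟩ := G.mem_S_iff.mp hx
    exact ⟨A, hA, B, hB, rfl, Nat.zero_le _⟩
  | succ N ih =>
    obtain ⟨y, hy, z, hz, rfl⟩ := mem_nM_succ.mp hx
    obtain ⟨a, ha, b, hb, rfl⟩ := G.mem_S_iff.mp hy.1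
    obtain ⟨A, hA, B, hB, rfl, hN⟩ := ih hz
    have hpos : 1 ≤ ordS G.S₁ a + ordS G.S₂ b := by
      by_cases ha0 : a = 0
      · have hb0 : b ≠ 0 := fun hb0 => hy.2 (by simp [ha0, hb0])
        have := h₂.one_le_ordS hb hb0
        omega
      · have := h₁.one_le_ordS ha ha0
        omega
    refine ⟨a + A, h₁.2.1 _ ha _ hA, b + B, h₂.2.1 _ hb _ hB, by ring, ?_⟩
    have := ordS_add_ordS_le h₁.2.1 ha hA
    have := ordS_add_ordS_le h₂.2.1 hb hB
    omega

lemma exists_eq_mul_of_mul_add_mul_eq {k : ℕ} (h : G.q * A + G.p * k = G.q * a) :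
    ∃ t, k = t * G.q ∧ a = A + t * G.p := by
  have hdvd : G.q ∣ G.p * k := (Nat.dvd_add_right (dvd_mul_right _ _)).mp (h ▸ dvd_mul_right _ _)
  obtain ⟨t, rfl⟩ := (Nat.Coprime.symm G.hpq).dvd_of_dvd_mul_left hdvd
  refine ⟨t, mul_comm _ _, Nat.eq_of_mul_eq_mul_left (Nat.pos_of_ne_zero G.q_ne_zero) ?_⟩
  rw [← h]
  ring

lemma exists_eq_add_mul_of_add_eq (hb : b ∈ Ap G.S₂ G.q) (hB : B ∈ G.S₂)
    (h : G.q * A + G.p * B = G.q * a + G.p * b) : ∃ t, B = b + t * G.q ∧ a = A + t * G.p := by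
  rcases le_or_gt b B with hbB | hBb
  · obtain ⟨k, rfl⟩ := Nat.exists_eq_add_of_le hbB
    obtain ⟨t, rfl, rfl⟩ :=
      G.exists_eq_mul_of_mul_add_mul_eq (A := A) (a := a) (k := k) (by linarith)
    exact ⟨t, rfl, rfl⟩
  · obtain ⟨k, rfl⟩ := Nat.exists_eq_add_of_lt hBb
    obtain ⟨t, ht, -⟩ :=
      G.exists_eq_mul_of_mul_add_mul_eq (A := a) (a := A) (k := k + 1) (by linarith)
    obtain ⟨t, rfl⟩ := Nat.exists_eq_succ_of_ne_zero (n := t) (by rintro rfl; simp at ht)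
    rw [add_assoc, ht] at hb
    exact absurd hb (add_succ_mul_notMem_Ap G.isNumSgp_S₂.2.1 hB G.hq t)

lemma injOn_rep : Set.InjOn (fun ab : ℕ × ℕ => G.q * ab.1 + G.p * ab.2)
    {ab | ab.2 ∈ Ap G.S₂ G.q} := by
  rintro ⟨a, b⟩ (hb : b ∈ Ap G.S₂ G.q) ⟨a', b'⟩ (hb' : b' ∈ Ap G.S₂ G.q)
    (h : G.q * a + G.p * b = G.q * a' + G.p * b')
  obtain ⟨t, rfl, rfl⟩ := G.exists_eq_add_mul_of_add_eq hb' hb.1 h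
  rcases t with _ | t
  · simp
  · exact absurd hb (add_succ_mul_notMem_Ap G.isNumSgp_S₂.2.1 hb'.1 G.hq t)

lemma exists_rep {x : ℕ} (hx : x ∈ G.S) :
    ∃ a ∈ G.S₁, ∃ b ∈ Ap G.S₂ G.q, G.q * a + G.p * b = x := by
  obtain ⟨A, hA, B, hB, rfl⟩ := G.mem_S_iff.mp hx
  obtain ⟨b, hb, t, rfl⟩ := exists_mem_Ap_add_mul G.q_ne_zero hB
  exact ⟨A + t * G.p, add_mul_mem G.isNumSgp_S₁.2.1 hA G.hp t, b, hb, by ring⟩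

/-- The order is attained by some representation `q A + p B`, with `B = b + t q` and
`a = A + t p`. Passing from `B` to `b` loses at most `t (ord q + l_q)` of order, passing from `A`
to `a` gains at least `t ord p`, and the gluing being specific means the balance is `≥ 0`. -/
lemma ordS_S_rep (hG : G.Specific) (ha : a ∈ G.S₁) (hb : b ∈ Ap G.S₂ G.q) :
    ordS G.S (G.q * a + G.p * b) = ordS G.S₁ a + ordS G.S₂ b := by
  have h₁ := G.isNumSgp_S₁
  have h₂ := G.isNumSgp_S₂
  refine le_antisymm ?_ (le_ordS (add_mem_nM_add G.add_mem_S
    (G.q_mul_mem_nM (mem_nM_ordS ha)) (G.p_mul_mem_nM (mem_nM_ordS hb.1))))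
  obtain ⟨A, hA, B, hB, hx, hN⟩ :=
    G.exists_le_ordS_add_ordS_of_mem_nM (mem_nM_ordS (G.mul_mem_S ha hb.1))
  obtain ⟨t, rfl, rfl⟩ := G.exists_eq_add_mul_of_add_eq hb hB hx
  have hB' := h₂.ordS_add_mul_le hb.1 G.hq t
  have hA' : ordS G.S₁ A + t * ordS G.S₁ G.p ≤ ordS G.S₁ (A + t * G.p) :=
    le_ordS (add_mem_nM_add h₁.2.1 (mem_nM_ordS hA) (h₁.mul_mem_nM_mul (mem_nM_ordS G.hp) t))
  have := Nat.mul_le_mul_left t hG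
  omega

def repLevel (n : ℕ) : Set (ℕ × ℕ) :=
  {ab | ab.1 ∈ G.S₁ ∧ ab.2 ∈ Ap G.S₂ G.q ∧ ordS G.S₁ ab.1 + ordS G.S₂ ab.2 = n}

lemma HilbS_S_eq_ncard_repLevel (hG : G.Specific) (n : ℕ) :
    HilbS G.S n = (G.repLevel n).ncard := by
  rw [HilbS_eq_ncard G.add_mem_S, ← (G.injOn_rep.mono fun ab h => h.2.1).ncard_image]
  congr 1
  ext x
  constructor
  · rintro ⟨hx, rfl⟩
    obtain ⟨a, ha, b, hb, rfl⟩ := G.exists_rep hx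
    exact ⟨(a, b), ⟨ha, hb, (G.ordS_S_rep hG ha hb).symm⟩, rfl⟩
  · rintro ⟨⟨a, b⟩, ⟨ha, hb, rfl⟩, rfl⟩
    exact ⟨G.mul_mem_S ha hb.1, G.ordS_S_rep hG ha hb⟩

lemma finite_repLevel (n : ℕ) : (G.repLevel n).Finite :=
  ((G.isNumSgp_S₁.finite_setOf_ordS_le n).prod (G.isNumSgp_S₂.finite_setOf_ordS_le n)).subset
    fun _ ⟨ha, hb, hn⟩ => ⟨⟨ha, by omega⟩, ⟨hb.1, by omega⟩⟩

lemma ncard_repLevel_le_succ (h₁ : ∀ t, HilbS G.S₁ t ≤ HilbS G.S₁ (t + 1)) (n : ℕ) :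
    (G.repLevel n).ncard ≤ (G.repLevel (n + 1)).ncard := by
  choose ψ hψmaps hψinj using fun i => G.isNumSgp_S₁.exists_injOn_ordS_eq_succ (h₁ i)
  refine Set.ncard_le_ncard_of_injOn (fun ab => (ψ (ordS G.S₁ ab.1) ab.1, ab.2)) ?_ ?_
    (G.finite_repLevel (n + 1))
  · rintro ⟨a, b⟩ ⟨ha, hb, rfl⟩
    obtain ⟨hψa, hord⟩ := hψmaps _ ⟨ha, rfl⟩
    exact ⟨hψa, hb, by simp only at hord ⊢; omega⟩
  · rintro ⟨a, b⟩ ⟨ha, -⟩ ⟨a', b'⟩ ⟨ha', -⟩ h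
    simp only [Prod.mk.injEq] at h
    obtain ⟨hψ, rfl⟩ := h
    have hord : ordS G.S₁ a = ordS G.S₁ a' := by
      have hord := (hψmaps _ ⟨ha, rfl⟩).2
      have hord' := (hψmaps _ ⟨ha', rfl⟩).2
      simp only at hψ hord hord'
      rw [hψ] at hord
      omega
    rw [hord] at hψ
    exact Prod.ext (hψinj _ ⟨ha, hord⟩ ⟨ha', rfl⟩ hψ) rfl

end Gluing

/-- for a specific gluing `S` of `S₁` and `S₂`, if the Hilbert
function of `S₁` is non-decreasing, then so is the Hilbert function of `S`. -/
theorem stmt18 (G : Gluing) (hG : G.Specific)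
    (h₁ : ∀ t : ℕ, HilbS G.S₁ t ≤ HilbS G.S₁ (t + 1)) :
    ∀ t : ℕ, HilbS G.S t ≤ HilbS G.S (t + 1) := by
  intro n
  rw [G.HilbS_S_eq_ncard_repLevel hG, G.HilbS_S_eq_ncard_repLevel hG]
  exact G.ncard_repLevel_le_succ h₁ n
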